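/- With w = 1 − √2/2 and any admissible q (w ≤ q ≤ 2w), the quantity p₂ = C(qT, wT)·C(wT, (q−w)T) / C(T, wT)² satisfies p₂ ≤ 2^{(−1+o(1))T} as T → ∞; in exponent form, q·h(w/q) + w·h((q−w)/w) − 2h(w) ≤ −1. -/

import Mathlib

/-!
Write `a = q - w` and `b = 2w - q`, so that `q = 2a + b` and `w = a + b`. By the chain rule for
entropy, `q·h(w/q) + w·h(a/w)` is `q` times the entropy of the distribution `(a, a, b)/q`. Gibbs'
inequality bounds this by the cross entropy against `(r, r, r²)` with `r = √2 - 1`, a probability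
vector since `r² + 2r = 1`, which gives `-2w·log r`. The constant `w` is chosen so that
`w = r·(1 - w)` and `1 - w = √2/2`, and then `-2w·log r - 2h(w)` collapses to `2·log(√2/2) = -log 2`.
-/

open Real

lemma mul_negMulLog_div (x : ℝ) {y : ℝ} (hy : y ≠ 0) :
    y * negMulLog (x / y) = negMulLog x - x / y * negMulLog y := by
  have h := negMulLog_mul (x / y) y
  rw [div_mul_cancel₀ x hy] at h
  linarith

lemma mul_binEntropy_div (x : ℝ) {y : ℝ} (hy : y ≠ 0) :
    y * binEntropy (x / y) = negMulLog x + negMulLog (y - x) - negMulLog y := by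
  rw [binEntropy_eq_negMulLog_add_negMulLog_one_sub, one_sub_div hy, mul_add,
    mul_negMulLog_div x hy, mul_negMulLog_div (y - x) hy]
  field_simp
  ring

lemma negMulLog_add_mul_log_le {x y : ℝ} (hx : 0 ≤ x) (hy : 0 < y) :
    negMulLog x + x * log y ≤ y - x := by
  have h := mul_le_mul_of_nonneg_left (negMulLog_le_one_sub_self (div_nonneg hx hy.le)) hy.le
  have hxy : x / y * negMulLog y = -(x * log y) := by
    rw [negMulLog]
    field_simp
  rw [mul_negMulLog_div x hy.ne', hxy, mul_one_sub, mul_div_cancel₀ x hy.ne'] at h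
  linarith

/-- Gibbs' inequality for the distribution `(a, a, b)/(2a + b)` against `(r, r, r²)`. -/
lemma entropy_le_crossEntropy {a b r : ℝ} (ha : 0 ≤ a) (hb : 0 ≤ b) (hr : 0 < r)
    (hr_sum : r ^ 2 + 2 * r = 1) :
    2 * negMulLog a + negMulLog b - negMulLog (2 * a + b) ≤ -2 * (a + b) * log r := by
  rcases (show 0 ≤ 2 * a + b by positivity).eq_or_lt with hs | hs
  · obtain ⟨rfl, rfl⟩ : a = 0 ∧ b = 0 := ⟨by linarith, by linarith⟩
    simp
  have hA := negMulLog_add_mul_log_le ha (mul_pos hs hr)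
  have hB := negMulLog_add_mul_log_le hb (mul_pos hs (pow_pos hr 2))
  rw [log_mul hs.ne' hr.ne'] at hA
  rw [log_mul hs.ne' (pow_pos hr 2).ne', log_pow] at hB
  have hS : negMulLog (2 * a + b) = -(2 * a + b) * log (2 * a + b) := rfl
  linear_combination 2 * hA + hB + (2 * a + b) * hr_sum - hS

lemma mul_binEntropy_div_add_mul_binEntropy_sub_div_le {w q r : ℝ} (hw : 0 < w) (hwq : w ≤ q)
    (hq : q ≤ 2 * w) (hr : 0 < r) (hr_sum : r ^ 2 + 2 * r = 1) :
    q * binEntropy (w / q) + w * binEntropy ((q - w) / w) ≤ -2 * w * log r := by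
  have hgibbs := entropy_le_crossEntropy (by linarith : 0 ≤ q - w) (by linarith : 0 ≤ 2 * w - q)
    hr hr_sum
  rw [show 2 * (q - w) + (2 * w - q) = q by ring, show q - w + (2 * w - q) = w by ring] at hgibbs
  rw [mul_binEntropy_div _ (by linarith : q ≠ 0), mul_binEntropy_div _ hw.ne',
    show w - (q - w) = 2 * w - q by ring]
  linarith

lemma two_mul_binEntropy_one_sub_sqrt_two_div_two :
    2 * binEntropy (1 - √2 / 2) = log 2 - 2 * (1 - √2 / 2) * log (√2 - 1) := by
  have hsqrt : √2 * √2 = 2 := mul_self_sqrt zero_le_two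
  have hr : 0 < √2 - 1 := sub_pos.mpr one_lt_sqrt_two
  have hc : 0 < √2 / 2 := by positivity
  have hlog_c : log (√2 / 2) = -log 2 / 2 := by
    rw [log_div (by positivity) two_ne_zero, log_sqrt zero_le_two]
    ring
  -- `1 - √2/2 = (√2 - 1)·(√2/2)`
  have hlog_w : log (1 - √2 / 2) = log (√2 - 1) + log (√2 / 2) := by
    rw [← log_mul hr.ne' hc.ne']
    congr 1
    linear_combination -hsqrt / 2
  rw [binEntropy_eq_negMulLog_add_negMulLog_one_sub, sub_sub_cancel, negMulLog, negMulLog, hlog_w]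
  linear_combination -2 * hlog_c

/-- With `w = 1 − √2/2` and any `q` with `w ≤ q ≤ 2w ≤ 1`, the entropy
exponent of `p₂ = C(qT, wT)·C(wT, (q−w)T)/C(T, wT)²`, namely
`q·h(w/q) + w·h((q−w)/w) − 2h(w)` with `h` the binary entropy function, is at
most `−1`; this yields `p₂ ≤ 2^{(−1+o(1))T}`. -/
theorem stmt_8 (h : ℝ → ℝ)
    (hh : ∀ x : ℝ, h x = -x * Real.logb 2 x - (1 - x) * Real.logb 2 (1 - x))
    (w : ℝ) (hw : w = 1 - Real.sqrt 2 / 2) :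
    ∀ q : ℝ, w ≤ q → q ≤ 2 * w →
      q * h (w / q) + w * h ((q - w) / w) - 2 * h w ≤ -1 := by
  intro q hwq hq
  have h_eq (x : ℝ) : h x = binEntropy x / log 2 := by
    rw [hh, binEntropy_eq_negMulLog_add_negMulLog_one_sub, negMulLog, negMulLog, ← log_div_log,
      ← log_div_log]
    ring
  have hw0 : 0 < w := by linarith [sqrt_two_lt_three_halves]
  have hbound := mul_binEntropy_div_add_mul_binEntropy_sub_div_le hw0 hwq hq
    (sub_pos.mpr one_lt_sqrt_two) (by linear_combination mul_self_sqrt zero_le_two)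
  have hconst := two_mul_binEntropy_one_sub_sqrt_two_div_two
  rw [← hw] at hconst
  have hlog2 : 0 < log 2 := log_pos one_lt_two
  calc q * h (w / q) + w * h ((q - w) / w) - 2 * h w
      = (q * binEntropy (w / q) + w * binEntropy ((q - w) / w) - 2 * binEntropy w) / log 2 := by
        simp only [h_eq]; ring
    _ ≤ -log 2 / log 2 := by gcongr; linarith
    _ = -1 := neg_div_self hlog2.ne'
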